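/- Let p ≥ 2 and ψ ∈ Ψ. If u = 0, then for every 1 ≤ r ≤ p and every timelike r-dimensional subspace π of (N, g_N) one has rank J_N(π) = p−1 if r = 1 and rank J_N(π) = p if r ≥ 2; in particular rank J_N(·) is constant on timelike r-planes and, since J_N(π)² = 0, (N, g_N) is Jordan Osserman of type (r,0). Dually, if v = 0, then for every 1 ≤ s ≤ p and every spacelike s-dimensional subspace π, rank J_N(π) = p−1 if s = 1 and = p if s ≥ 2, so (N, g_N) is Jordan Osserman of type (0,s). -/

import Mathlib

open scoped BigOperators

/-- The partial derivative `∂ₖ f` at `x`. -/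
noncomputable def pd {p : ℕ} (f : (Fin p → ℝ) → ℝ) (k : Fin p) (x : Fin p → ℝ) : ℝ :=
  fderiv ℝ f x (Pi.single k 1)

/-- The second partial derivative `∂ₖ ∂ₗ f` at `x`. -/
noncomputable def pd2 {p : ℕ} (f : (Fin p → ℝ) → ℝ) (k l : Fin p) (x : Fin p → ℝ) : ℝ :=
  pd (pd f l) k x

/-- The curvature components
`R_ψ(i,j,k,l) := -(1/2)(ψ_{il/jk} + ψ_{jk/il} - ψ_{ik/jl} - ψ_{jl/ik})`,
where `ψ_{ab/cd} := ∂_c ∂_d ψ_{ab}`. -/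
noncomputable def curv {p : ℕ} (ψ : (Fin p → ℝ) → Fin p → Fin p → ℝ)
    (i j k l : Fin p) (x : Fin p → ℝ) : ℝ :=
  -(1/2) * (pd2 (fun y => ψ y i l) j k x + pd2 (fun y => ψ y j k) i l x
    - pd2 (fun y => ψ y i k) j l x - pd2 (fun y => ψ y j l) i k x)

/-- The Jacobi bilinear form `𝒥_ψ(x;X)(Y,Z) := Σ R_ψ(i,j,k,l)(x) Yᵢ Xⱼ Xₖ Zₗ`. -/
noncomputable def jacobiForm {p : ℕ} (ψ : (Fin p → ℝ) → Fin p → Fin p → ℝ)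
    (x X Y Z : Fin p → ℝ) : ℝ :=
  ∑ i, ∑ j, ∑ k, ∑ l, curv ψ i j k l x * Y i * X j * X k * Z l

/-- `ψ` is a smooth symmetric 2-tensor field on `ℝ^p`. -/
def IsSmoothSym {p : ℕ} (ψ : (Fin p → ℝ) → Fin p → Fin p → ℝ) : Prop :=
  (∀ i j, ContDiff ℝ (⊤ : ℕ∞) fun x => ψ x i j) ∧ ∀ x i j, ψ x i j = ψ x j i

/-- Membership in the class `Ψ`: `ψ` is a smooth symmetric 2-tensor field such that for every
`x` and every `X ≠ 0` the Jacobi form `𝒥_ψ(x;X)` is positive semidefinite with null space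
exactly the line `ℝ·X` (i.e. positive semidefinite of rank `p-1`). -/
def MemPsi {p : ℕ} (ψ : (Fin p → ℝ) → Fin p → Fin p → ℝ) : Prop :=
  IsSmoothSym ψ ∧ ∀ (x X : Fin p → ℝ), X ≠ 0 →
    (∀ Y, 0 ≤ jacobiForm ψ x X Y Y) ∧
    ∀ Y, (∀ Z, jacobiForm ψ x X Y Z = 0) ↔ ∃ c : ℝ, Y = c • X

/-- The model space `ℝ^{2p} = ℝ^p × ℝ^p`; `Sum.inl` indexes the `x`-coordinates and
`Sum.inr` the `y`-coordinates. -/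
abbrev VV (p : ℕ) := Fin p ⊕ Fin p → ℝ

/-- The neutral signature `(p,p)` metric `g_ψ` at the point with `x`-coordinate `x`:
`g(∂ᵢˣ,∂ⱼʸ) = δᵢⱼ`, `g(∂ᵢʸ,∂ⱼʸ) = 0`, `g(∂ᵢˣ,∂ⱼˣ) = ψᵢⱼ(x)`. -/
noncomputable def gpsi {p : ℕ} (ψ : (Fin p → ℝ) → Fin p → Fin p → ℝ)
    (x : Fin p → ℝ) (Z W : VV p) : ℝ :=
  (∑ i, Z (Sum.inl i) * W (Sum.inr i)) + (∑ i, Z (Sum.inr i) * W (Sum.inl i))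
    + ∑ i, ∑ j, ψ x i j * Z (Sum.inl i) * W (Sum.inl j)

/-- The Jacobi operator `J(x;Z)` of `(ℝ^{2p}, g_ψ)` as a matrix: its image lies in
`𝒴 = span{∂ᵢʸ}` and its `y`-components are
`(J(x;Z)W)_l = Σ_{i,j,k} R_ψ(i,j,k,l)(x) (ρW)ᵢ (ρZ)ⱼ (ρZ)ₖ`. -/
noncomputable def jacobiMat {p : ℕ} (ψ : (Fin p → ℝ) → Fin p → Fin p → ℝ)
    (x : Fin p → ℝ) (Z : VV p) : Matrix (Fin p ⊕ Fin p) (Fin p ⊕ Fin p) ℝ :=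
  Matrix.of fun a b =>
    match a, b with
    | Sum.inr l, Sum.inl i => ∑ j, ∑ k, curv ψ i j k l x * Z (Sum.inl j) * Z (Sum.inl k)
    | _, _ => 0

/-- `π` is a nondegenerate subspace of signature `(r,s)` for the symmetric bilinear form `g`:
`g` restricted to `π` is nondegenerate, the maximal dimension of a negative definite subspace
of `π` is `r`, and the maximal dimension of a positive definite subspace of `π` is `s`. -/
def HasSignature {V : Type*} [AddCommGroup V] [Module ℝ V] (g : V → V → ℝ)
    (π : Submodule ℝ V) (r s : ℕ) : Prop :=
  (∀ z ∈ π, (∀ w ∈ π, g z w = 0) → z = 0) ∧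
  (∃ W : Submodule ℝ V, W ≤ π ∧ Module.finrank ℝ W = r ∧ ∀ z ∈ W, z ≠ 0 → g z z < 0) ∧
  (∀ W : Submodule ℝ V, W ≤ π → (∀ z ∈ W, z ≠ 0 → g z z < 0) → Module.finrank ℝ W ≤ r) ∧
  (∃ W : Submodule ℝ V, W ≤ π ∧ Module.finrank ℝ W = s ∧ ∀ z ∈ W, z ≠ 0 → 0 < g z z) ∧
  (∀ W : Submodule ℝ V, W ≤ π → (∀ z ∈ W, z ≠ 0 → 0 < g z z) → Module.finrank ℝ W ≤ s)

/-- `e` is a `g`-orthonormal basis of `π` with signs `ε i = g(e i, e i) = ±1`. -/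
def IsOrthoBasis {V : Type*} [AddCommGroup V] [Module ℝ V] (g : V → V → ℝ)
    (π : Submodule ℝ V) {n : ℕ} (e : Fin n → V) (ε : Fin n → ℝ) : Prop :=
  Submodule.span ℝ (Set.range e) = π ∧ (∀ i, ε i = 1 ∨ ε i = -1) ∧
    ∀ i j, g (e i) (e j) = if i = j then ε i else 0

/-- The higher order Jacobi operator `J(π) := Σᵢ εᵢ J(x; eᵢ)` determined by a
`g_ψ`-orthonormal basis `e` with signs `ε` of a nondegenerate subspace. -/
noncomputable def hoJ {p : ℕ} (ψ : (Fin p → ℝ) → Fin p → Fin p → ℝ) (x : Fin p → ℝ)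
    {n : ℕ} (e : Fin n → VV p) (ε : Fin n → ℝ) :
    Matrix (Fin p ⊕ Fin p) (Fin p ⊕ Fin p) ℝ :=
  ∑ i, ε i • jacobiMat ψ x (e i)

/-- Two square matrices are similar (conjugate), i.e. they have the same Jordan normal form. -/
def MatSimilar {ι : Type*} [Fintype ι] [DecidableEq ι] (A B : Matrix ι ι ℝ) : Prop :=
  ∃ P : Matrix ι ι ℝ, IsUnit P.det ∧ A = P * B * P⁻¹

/-- The model space of the product `N = ℝ^{2p} × ℝ^{(u,v)}`. -/
abbrev VN (p u v : ℕ) := (Fin p ⊕ Fin p) ⊕ Fin (u + v) → ℝ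

/-- The product metric `g_N = g_ψ ⊕ ⟨·,·⟩_{(u,v)}` of signature `(p+u, p+v)`,
where the flat factor has `u` negative and `v` positive directions. -/
noncomputable def gN {p : ℕ} (u v : ℕ) (ψ : (Fin p → ℝ) → Fin p → Fin p → ℝ)
    (x : Fin p → ℝ) (Z W : VN p u v) : ℝ :=
  gpsi ψ x (fun a => Z (Sum.inl a)) (fun a => W (Sum.inl a))
    + ∑ i : Fin (u + v), (if (i : ℕ) < u then (-1 : ℝ) else 1) * Z (Sum.inr i) * W (Sum.inr i)

/-- The Jacobi operator of the product metric `g_N`: `J_N(x;Z)W = (J(x;Z_M)W_M, 0)`. -/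
noncomputable def jacobiMatN {p : ℕ} (u v : ℕ) (ψ : (Fin p → ℝ) → Fin p → Fin p → ℝ)
    (x : Fin p → ℝ) (Z : VN p u v) :
    Matrix ((Fin p ⊕ Fin p) ⊕ Fin (u + v)) ((Fin p ⊕ Fin p) ⊕ Fin (u + v)) ℝ :=
  Matrix.of fun a b =>
    match a, b with
    | Sum.inl a', Sum.inl b' => jacobiMat ψ x (fun c => Z (Sum.inl c)) a' b'
    | _, _ => 0

/-- The higher order Jacobi operator `J_N(π) := Σᵢ εᵢ J_N(x; eᵢ)` of `(N, g_N)`. -/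
noncomputable def hoJN {p : ℕ} (u v : ℕ) (ψ : (Fin p → ℝ) → Fin p → Fin p → ℝ)
    (x : Fin p → ℝ) {n : ℕ} (e : Fin n → VN p u v) (ε : Fin n → ℝ) :
    Matrix ((Fin p ⊕ Fin p) ⊕ Fin (u + v)) ((Fin p ⊕ Fin p) ⊕ Fin (u + v)) ℝ :=
  ∑ i, ε i • jacobiMatN u v ψ x (e i)


section Aux

variable {p : ℕ}

open scoped BigOperators

variable {p : ℕ}

lemma tuple_nested (F : Fin p → Fin p → Fin p → Fin p → ℝ) :
    ∑ x : Fin p × Fin p × Fin p × Fin p, F x.1 x.2.1 x.2.2.1 x.2.2.2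
      = ∑ i, ∑ j, ∑ k, ∑ l, F i j k l := by
  rw [Fintype.sum_prod_type]
  simp [Fintype.sum_prod_type]

lemma sum4_reverse (F : Fin p → Fin p → Fin p → Fin p → ℝ) :
    ∑ i, ∑ j, ∑ k, ∑ l, F i j k l = ∑ i, ∑ j, ∑ k, ∑ l, F l k j i := by
  rw [← tuple_nested, ← tuple_nested]
  exact Fintype.sum_equiv ⟨fun x => (x.2.2.2, x.2.2.1, x.2.1, x.1),
    fun x => (x.2.2.2, x.2.2.1, x.2.1, x.1), fun x => rfl, fun x => rfl⟩ _ _ (fun x => rfl)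

theorem pd2_symm (f : (Fin p → ℝ) → ℝ) (hf : ContDiff ℝ (⊤ : ℕ∞) f) (k l : Fin p)
    (x : Fin p → ℝ) : pd2 f k l x = pd2 f l k x := by
  have hdf : ContDiff ℝ (⊤ : ℕ∞) (fderiv ℝ f) := (hf.fderiv_right (by exact (by simp)))
  have key : ∀ v w : Fin p → ℝ, fderiv ℝ (fun y => fderiv ℝ f y v) x w
      = fderiv ℝ (fderiv ℝ f) x w v := by
    intro v w
    have h := fderiv_clm_apply (c := fderiv ℝ f) (u := fun _ => v) (x := x)
      ((hdf.differentiable (by simp)).differentiableAt) (differentiableAt_const v)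
    rw [h]; simp
  have hsymm : IsSymmSndFDerivAt ℝ f x :=
    hf.contDiffAt.isSymmSndFDerivAt (by rw [minSmoothness_of_isRCLikeNormedField]; exact WithTop.coe_le_coe.mpr le_top)
  show fderiv ℝ (fun y => fderiv ℝ f y (Pi.single l 1)) x (Pi.single k 1)
      = fderiv ℝ (fun y => fderiv ℝ f y (Pi.single k 1)) x (Pi.single l 1)
  rw [key, key, hsymm.eq]

theorem curv_symm {ψ : (Fin p → ℝ) → Fin p → Fin p → ℝ} (hψ : IsSmoothSym ψ)
    (i j k l : Fin p) (x : Fin p → ℝ) : curv ψ i j k l x = curv ψ l k j i x := by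
  obtain ⟨hs, hsym⟩ := hψ
  have e : ∀ a b : Fin p, (fun y => ψ y a b) = (fun y => ψ y b a) :=
    fun a b => funext fun y => hsym y a b
  unfold curv
  rw [e l i, e k j, e l j, e k i]
  rw [pd2_symm _ (hs i l) k j, pd2_symm _ (hs j k) l i,
    pd2_symm _ (hs j l) k i, pd2_symm _ (hs i k) l j]
  ring

theorem jacobiForm_symm {ψ : (Fin p → ℝ) → Fin p → Fin p → ℝ} (hψ : IsSmoothSym ψ)
    (x X Y Z : Fin p → ℝ) : jacobiForm ψ x X Y Z = jacobiForm ψ x X Z Y := by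
  unfold jacobiForm
  rw [sum4_reverse]
  refine Finset.sum_congr rfl fun i _ => Finset.sum_congr rfl fun j _ =>
    Finset.sum_congr rfl fun k _ => Finset.sum_congr rfl fun l _ => ?_
  rw [← curv_symm hψ]
  ring

theorem jacobiForm_add_right (ψ : (Fin p → ℝ) → Fin p → Fin p → ℝ)
    (x X Y Z W : Fin p → ℝ) :
    jacobiForm ψ x X Y (Z + W) = jacobiForm ψ x X Y Z + jacobiForm ψ x X Y W := by
  unfold jacobiForm
  rw [← Finset.sum_add_distrib]
  refine Finset.sum_congr rfl fun i _ => ?_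
  rw [← Finset.sum_add_distrib]
  refine Finset.sum_congr rfl fun j _ => ?_
  rw [← Finset.sum_add_distrib]
  refine Finset.sum_congr rfl fun k _ => ?_
  rw [← Finset.sum_add_distrib]
  refine Finset.sum_congr rfl fun l _ => ?_
  simp only [Pi.add_apply]; ring

theorem jacobiForm_smul_right (ψ : (Fin p → ℝ) → Fin p → Fin p → ℝ)
    (x X Y Z : Fin p → ℝ) (c : ℝ) :
    jacobiForm ψ x X Y (c • Z) = c * jacobiForm ψ x X Y Z := by
  unfold jacobiForm
  rw [Finset.mul_sum]
  refine Finset.sum_congr rfl fun i _ => ?_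
  rw [Finset.mul_sum]
  refine Finset.sum_congr rfl fun j _ => ?_
  rw [Finset.mul_sum]
  refine Finset.sum_congr rfl fun k _ => ?_
  rw [Finset.mul_sum]
  refine Finset.sum_congr rfl fun l _ => ?_
  simp only [Pi.smul_apply, smul_eq_mul]; ring

theorem quad_aux {b c : ℝ} (hc : 0 ≤ c) (h : ∀ t : ℝ, 0 ≤ b * t + c * t ^ 2) : b = 0 := by
  have hc1 : (0:ℝ) < c + 1 := by linarith
  have h1 := h (-(b / (c + 1)))
  have hb : b = b / (c + 1) * (c + 1) := by field_simp
  set s := b / (c + 1) with hs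
  rw [hb] at h1
  have hs0 : s = 0 := by nlinarith [sq_nonneg s]
  rw [hb, hs0]; ring

theorem jacobi_null {ψ : (Fin p → ℝ) → Fin p → Fin p → ℝ} (hψ : MemPsi ψ)
    (x X : Fin p → ℝ) (hX : X ≠ 0) (Y : Fin p → ℝ)
    (h0 : jacobiForm ψ x X Y Y = 0) : ∀ Z, jacobiForm ψ x X Y Z = 0 := by
  intro Z
  have hpos := (hψ.2 x X hX).1
  have hsym := jacobiForm_symm hψ.1 (x := x) (X := X)
  have hb : ∀ t : ℝ, 0 ≤ 2 * jacobiForm ψ x X Y Z * t + jacobiForm ψ x X Z Z * t ^ 2 := by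
    intro t
    have h := hpos (Y + t • Z)
    rw [jacobiForm_add_right] at h
    rw [hsym (Y + t • Z) Y, jacobiForm_add_right, hsym (Y + t • Z) (t • Z), jacobiForm_add_right]
      at h
    rw [h0, jacobiForm_smul_right, jacobiForm_smul_right, hsym (t • Z) Z, jacobiForm_smul_right, hsym (t • Z) Y, jacobiForm_smul_right] at h
    nlinarith [h]
  have := quad_aux (hpos Z) hb
  linarith

end Aux

section Sim

open Module Submodule LinearMap

variable {V : Type*} [AddCommGroup V] [Module ℝ V] [FiniteDimensional ℝ V]

noncomputable section

/-- Iso from a complement of the kernel to the range. -/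
def compKerEquivRange (f : V →ₗ[ℝ] V) {C : Submodule ℝ V} (hC : IsCompl (ker f) C) :
    C ≃ₗ[ℝ] (range f) := by
  refine LinearEquiv.ofBijective ((f.comp C.subtype).codRestrict (range f)
    (fun c => ⟨c, rfl⟩)) ⟨?_, ?_⟩
  · intro a b hab
    have hv : f (a:V) = f (b:V) := congrArg Subtype.val hab
    have hmem : ((a:V) - b) ∈ ker f ⊓ C :=
      ⟨by simp [mem_ker, map_sub, hv], sub_mem a.2 b.2⟩
    rw [hC.inf_eq_bot, Submodule.mem_bot] at hmem
    exact Subtype.ext (sub_eq_zero.mp hmem)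
  · rintro ⟨y, w, rfl⟩
    obtain ⟨k, hk, c, hc, rfl⟩ := Submodule.mem_sup.mp
      (by rw [hC.sup_eq_top]; trivial : w ∈ ker f ⊔ C)
    refine ⟨⟨c, hc⟩, ?_⟩
    apply Subtype.ext
    simp only [codRestrict_apply, comp_apply, Submodule.coe_subtype]
    rw [map_add, mem_ker.mp hk, zero_add]
    rfl

theorem endo_similar (f g : V →ₗ[ℝ] V) (hf : ∀ w, f (f w) = 0) (hg : ∀ w, g (g w) = 0)
    (hr : finrank ℝ (range f) = finrank ℝ (range g)) :
    ∃ e : V ≃ₗ[ℝ] V, ∀ w, g (e w) = e (f w) := by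
  classical
  obtain ⟨C₁, hC₁⟩ := Submodule.exists_isCompl (ker f)
  obtain ⟨C₂, hC₂⟩ := Submodule.exists_isCompl (ker g)
  have hrk1 : range f ≤ ker f := range_le_ker_iff.mpr (by ext w; simp [hf w])
  have hrk2 : range g ≤ ker g := range_le_ker_iff.mpr (by ext w; simp [hg w])
  set R₁ : Submodule ℝ (ker f) := (range f).comap (ker f).subtype with hR₁def
  set R₂ : Submodule ℝ (ker g) := (range g).comap (ker g).subtype with hR₂def
  obtain ⟨D₁, hD₁⟩ := Submodule.exists_isCompl R₁
  obtain ⟨D₂, hD₂⟩ := Submodule.exists_isCompl R₂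
  -- dimension bookkeeping
  have eq1 : finrank ℝ C₁ = finrank ℝ C₂ := by
    have a1 := (Submodule.quotientEquivOfIsCompl _ _ hC₁).finrank_eq
    have a2 := (Submodule.quotientEquivOfIsCompl _ _ hC₂).finrank_eq
    have b1 := (f.quotKerEquivRange).finrank_eq
    have b2 := (g.quotKerEquivRange).finrank_eq
    omega
  have eqR1 : finrank ℝ R₁ = finrank ℝ (range f) :=
    (Submodule.comapSubtypeEquivOfLe hrk1).finrank_eq
  have eqR2 : finrank ℝ R₂ = finrank ℝ (range g) :=
    (Submodule.comapSubtypeEquivOfLe hrk2).finrank_eq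
  have eqK : finrank ℝ (ker f) = finrank ℝ (ker g) := by
    have a1 := f.finrank_range_add_finrank_ker
    have a2 := g.finrank_range_add_finrank_ker
    omega
  have eqD : finrank ℝ D₁ = finrank ℝ D₂ := by
    have a1 := Submodule.finrank_add_eq_of_isCompl hD₁
    have a2 := Submodule.finrank_add_eq_of_isCompl hD₂
    omega
  let φC : C₁ ≃ₗ[ℝ] C₂ := LinearEquiv.ofFinrankEq _ _ eq1
  let φD : D₁ ≃ₗ[ℝ] D₂ := LinearEquiv.ofFinrankEq _ _ eqD
  let fC : C₁ ≃ₗ[ℝ] (range f) := compKerEquivRange f hC₁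
  let gC : C₂ ≃ₗ[ℝ] (range g) := compKerEquivRange g hC₂
  let ι : (range f) ≃ₗ[ℝ] (range g) := fC.symm.trans (φC.trans gC)
  let ι' : R₁ ≃ₗ[ℝ] R₂ := (Submodule.comapSubtypeEquivOfLe hrk1).trans
    (ι.trans (Submodule.comapSubtypeEquivOfLe hrk2).symm)
  let χ : (ker f) ≃ₗ[ℝ] (ker g) := (Submodule.prodEquivOfIsCompl _ _ hD₁).symm.trans
    ((ι'.prodCongr φD).trans (Submodule.prodEquivOfIsCompl _ _ hD₂))
  let e : V ≃ₗ[ℝ] V := (Submodule.prodEquivOfIsCompl _ _ hC₁).symm.trans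
    (((χ.prodCongr φC).trans (Submodule.prodEquivOfIsCompl _ _ hC₂)) : _)
  refine ⟨e, ?_⟩
  have he_C : ∀ c : C₁, e (c : V) = (φC c : V) := by
    intro c
    show (Submodule.prodEquivOfIsCompl _ _ hC₂) ((χ.prodCongr φC)
      ((Submodule.prodEquivOfIsCompl _ _ hC₁).symm (c : V))) = _
    rw [Submodule.prodEquivOfIsCompl_symm_apply_right]
    simp [LinearEquiv.prodCongr_apply]
  have he_K : ∀ k : ker f, e (k : V) = (χ k : V) := by
    intro k
    show (Submodule.prodEquivOfIsCompl _ _ hC₂) ((χ.prodCongr φC)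
      ((Submodule.prodEquivOfIsCompl _ _ hC₁).symm (k : V))) = _
    rw [Submodule.prodEquivOfIsCompl_symm_apply_left]
    simp [LinearEquiv.prodCongr_apply]
  have hχR : ∀ (k : ker f) (hkR : (k : V) ∈ range f),
      (χ k : V) = (ι ⟨(k : V), hkR⟩ : V) := by
    intro k hkR
    have hkR' : k ∈ R₁ := hkR
    show ((Submodule.prodEquivOfIsCompl _ _ hD₂) ((ι'.prodCongr φD)
      ((Submodule.prodEquivOfIsCompl _ _ hD₁).symm k)) : V) = _
    have hsymm : (Submodule.prodEquivOfIsCompl R₁ D₁ hD₁).symm k = ((⟨k, hkR'⟩ : R₁), (0 : D₁)) :=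
      Submodule.prodEquivOfIsCompl_symm_apply_left (h := hD₁) (x := (⟨k, hkR'⟩ : R₁))
    rw [hsymm]
    simp only [LinearEquiv.prodCongr_apply, map_zero, Submodule.coe_prodEquivOfIsCompl',
      Submodule.coe_add, ZeroMemClass.coe_zero, add_zero]
    rfl
  intro w
  obtain ⟨k, hk, c, hc, rfl⟩ := Submodule.mem_sup.mp
    (by rw [hC₁.sup_eq_top]; trivial : w ∈ ker f ⊔ C₁)
  have h1 : e (k + c) = (χ ⟨k, hk⟩ : V) + (φC ⟨c, hc⟩ : V) := by
    rw [map_add, he_K ⟨k, hk⟩, he_C ⟨c, hc⟩]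
  have h2 : g (e (k + c)) = g ((φC ⟨c, hc⟩ : V)) := by
    rw [h1, map_add, mem_ker.mp (χ ⟨k, hk⟩).2, zero_add]
  have hfc : f (k + c) = ((fC ⟨c, hc⟩ : range f) : V) := by
    rw [map_add, mem_ker.mp hk, zero_add]; rfl
  have h3 : e (f (k + c)) = (ι (fC ⟨c, hc⟩) : V) := by
    rw [hfc]
    have hmem : ((fC ⟨c, hc⟩ : range f) : V) ∈ range f := (fC ⟨c, hc⟩).2
    have hkmem : ((fC ⟨c, hc⟩ : range f) : V) ∈ ker f := hrk1 hmem
    have : ((fC ⟨c, hc⟩ : range f) : V) = ((⟨_, hkmem⟩ : ker f) : V) := rfl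
    rw [this, he_K, hχR ⟨_, hkmem⟩ hmem]
  have h4 : ι (fC ⟨c, hc⟩) = gC (φC ⟨c, hc⟩) := by
    show fC.symm.trans (φC.trans gC) (fC ⟨c, hc⟩) = _
    simp
  rw [h2, h3, h4]
  rfl


theorem mat_similar_of_sq_zero {ι : Type*} [Fintype ι] [DecidableEq ι] (A B : Matrix ι ι ℝ)
    (hA : A * A = 0) (hB : B * B = 0) (hr : A.rank = B.rank) : MatSimilar A B := by
  have hfl : ∀ (M : Matrix ι ι ℝ), M.mulVecLin = Matrix.toLin' M := fun M => rfl
  have hf : ∀ w, (Matrix.toLin' A) ((Matrix.toLin' A) w) = 0 := by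
    intro w
    have : Matrix.toLin' (A * A) w = 0 := by rw [hA]; simp
    rwa [Matrix.toLin'_mul, LinearMap.comp_apply] at this
  have hg : ∀ w, (Matrix.toLin' B) ((Matrix.toLin' B) w) = 0 := by
    intro w
    have : Matrix.toLin' (B * B) w = 0 := by rw [hB]; simp
    rwa [Matrix.toLin'_mul, LinearMap.comp_apply] at this
  obtain ⟨e, he⟩ := endo_similar (Matrix.toLin' A) (Matrix.toLin' B) hf hg
    (by rw [Matrix.rank, Matrix.rank, hfl, hfl] at hr; exact hr)
  have hfe : Matrix.toLin' A = (e.symm : (ι → ℝ) →ₗ[ℝ] (ι → ℝ)) ∘ₗ Matrix.toLin' B ∘ₗ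
      (e : (ι → ℝ) →ₗ[ℝ] (ι → ℝ)) := by
    apply LinearMap.ext; intro w
    simp only [LinearMap.comp_apply, LinearEquiv.coe_coe]
    rw [he w]; simp
  set P := LinearMap.toMatrix' (e.symm : (ι → ℝ) →ₗ[ℝ] (ι → ℝ)) with hP
  set Q := LinearMap.toMatrix' (e : (ι → ℝ) →ₗ[ℝ] (ι → ℝ)) with hQ
  have hPQ : P * Q = 1 := by
    rw [hP, hQ, ← LinearMap.toMatrix'_comp]
    have : (e.symm : (ι → ℝ) →ₗ[ℝ] (ι → ℝ)) ∘ₗ (e : (ι → ℝ) →ₗ[ℝ] (ι → ℝ))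
        = LinearMap.id := by apply LinearMap.ext; intro w; simp
    rw [this, LinearMap.toMatrix'_id]
  refine ⟨P, ?_, ?_⟩
  · have : P.det * Q.det = 1 := by rw [← Matrix.det_mul, hPQ, Matrix.det_one]
    exact IsUnit.of_mul_eq_one _ this
  · have hQP : P⁻¹ = Q := Matrix.inv_eq_right_inv hPQ
    rw [hQP]
    have : A = LinearMap.toMatrix' (Matrix.toLin' A) := (LinearMap.toMatrix'_toLin' A).symm
    rw [this, hfe, LinearMap.toMatrix'_comp, LinearMap.toMatrix'_comp,
      LinearMap.toMatrix'_toLin']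
    rw [hP, hQ, Matrix.mul_assoc]

end
end Sim

section Aux2

variable {p : ℕ}
variable {u v : ℕ} {ψ : (Fin p → ℝ) → Fin p → Fin p → ℝ}

-- entry lemmas
lemma jacobiMatN_col_inlr (x : Fin p → ℝ) (Z : VN p u v) (a : (Fin p ⊕ Fin p) ⊕ Fin (u+v))
    (l : Fin p) : jacobiMatN u v ψ x Z a (Sum.inl (Sum.inr l)) = 0 := by
  rcases a with (a'|a'') <;> [skip; rfl]
  rcases a' with (i|j) <;> rfl

lemma jacobiMatN_col_inr (x : Fin p → ℝ) (Z : VN p u v) (a : (Fin p ⊕ Fin p) ⊕ Fin (u+v))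
    (m : Fin (u+v)) : jacobiMatN u v ψ x Z a (Sum.inr m) = 0 := by
  rcases a with (a'|a'') <;> rfl

lemma jacobiMatN_row_inll (x : Fin p → ℝ) (Z : VN p u v) (i : Fin p)
    (b : (Fin p ⊕ Fin p) ⊕ Fin (u+v)) : jacobiMatN u v ψ x Z (Sum.inl (Sum.inl i)) b = 0 := by
  rcases b with ((i'|l')|m) <;> rfl

lemma jacobiMatN_row_inr (x : Fin p → ℝ) (Z : VN p u v) (m : Fin (u+v))
    (b : (Fin p ⊕ Fin p) ⊕ Fin (u+v)) : jacobiMatN u v ψ x Z (Sum.inr m) b = 0 := by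
  rcases b with ((i'|l')|m') <;> rfl

lemma jacobiMatN_entry (x : Fin p → ℝ) (Z : VN p u v) (l i : Fin p) :
    jacobiMatN u v ψ x Z (Sum.inl (Sum.inr l)) (Sum.inl (Sum.inl i))
      = ∑ j, ∑ k, curv ψ i j k l x * Z (Sum.inl (Sum.inl j)) * Z (Sum.inl (Sum.inl k)) := rfl

lemma hoJN_sq (x : Fin p → ℝ) {n : ℕ} (e : Fin n → VN p u v) (ε : Fin n → ℝ) :
    hoJN u v ψ x e ε * hoJN u v ψ x e ε = 0 := by
  ext a b
  rw [Matrix.mul_apply]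
  apply Finset.sum_eq_zero
  intro c _
  rcases c with ((i|l)|m)
  · have : hoJN u v ψ x e ε (Sum.inl (Sum.inl i)) b = 0 := by
      unfold hoJN
      simp [Matrix.sum_apply, Matrix.smul_apply, jacobiMatN_row_inll]
    rw [this]; ring
  · have : hoJN u v ψ x e ε a (Sum.inl (Sum.inr l)) = 0 := by
      unfold hoJN
      simp [Matrix.sum_apply, Matrix.smul_apply, jacobiMatN_col_inlr]
    rw [this]; ring
  · have : hoJN u v ψ x e ε a (Sum.inr m) = 0 := by
      unfold hoJN
      simp [Matrix.sum_apply, Matrix.smul_apply, jacobiMatN_col_inr]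
    rw [this]; ring

open Module

/-- The essential `p×p` block of `hoJN`. -/
noncomputable def Mblock (ψ : (Fin p → ℝ) → Fin p → Fin p → ℝ) (x : Fin p → ℝ)
    {u v n : ℕ} (e : Fin n → VN p u v) (ε : Fin n → ℝ) : Matrix (Fin p) (Fin p) ℝ :=
  Matrix.of fun l i => ∑ m, ε m * ∑ j, ∑ k,
    curv ψ i j k l x * e m (Sum.inl (Sum.inl j)) * e m (Sum.inl (Sum.inl k))

lemma hoJN_entry (x : Fin p → ℝ) {n : ℕ} (e : Fin n → VN p u v) (ε : Fin n → ℝ) (l i : Fin p) :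
    hoJN u v ψ x e ε (Sum.inl (Sum.inr l)) (Sum.inl (Sum.inl i)) = Mblock ψ x e ε l i := by
  unfold hoJN Mblock
  simp [Matrix.sum_apply, Matrix.smul_apply, jacobiMatN_entry]

lemma hoJN_row_inll (x : Fin p → ℝ) {n : ℕ} (e : Fin n → VN p u v) (ε : Fin n → ℝ) (i : Fin p)
    (b : (Fin p ⊕ Fin p) ⊕ Fin (u+v)) : hoJN u v ψ x e ε (Sum.inl (Sum.inl i)) b = 0 := by
  unfold hoJN; simp [Matrix.sum_apply, Matrix.smul_apply, jacobiMatN_row_inll]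

lemma hoJN_row_inr (x : Fin p → ℝ) {n : ℕ} (e : Fin n → VN p u v) (ε : Fin n → ℝ)
    (m : Fin (u+v)) (b : (Fin p ⊕ Fin p) ⊕ Fin (u+v)) :
    hoJN u v ψ x e ε (Sum.inr m) b = 0 := by
  unfold hoJN; simp [Matrix.sum_apply, Matrix.smul_apply, jacobiMatN_row_inr]

lemma hoJN_col_inlr (x : Fin p → ℝ) {n : ℕ} (e : Fin n → VN p u v) (ε : Fin n → ℝ)
    (a : (Fin p ⊕ Fin p) ⊕ Fin (u+v)) (l : Fin p) :
    hoJN u v ψ x e ε a (Sum.inl (Sum.inr l)) = 0 := by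
  unfold hoJN; simp [Matrix.sum_apply, Matrix.smul_apply, jacobiMatN_col_inlr]

lemma hoJN_col_inr (x : Fin p → ℝ) {n : ℕ} (e : Fin n → VN p u v) (ε : Fin n → ℝ)
    (a : (Fin p ⊕ Fin p) ⊕ Fin (u+v)) (m : Fin (u+v)) :
    hoJN u v ψ x e ε a (Sum.inr m) = 0 := by
  unfold hoJN; simp [Matrix.sum_apply, Matrix.smul_apply, jacobiMatN_col_inr]

/-- The injection of `ℝ^p` into the `y`-coordinates of `VN`. -/
noncomputable def iotaY (p u v : ℕ) : (Fin p → ℝ) →ₗ[ℝ] VN p u v where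
  toFun y := Sum.elim (Sum.elim (fun _ => (0:ℝ)) y) (fun _ => (0:ℝ))
  map_add' y z := by funext a; rcases a with ((i|l)|m) <;> simp
  map_smul' c y := by funext a; rcases a with ((i|l)|m) <;> simp

/-- The projection of `VN` onto the `x`-coordinates. -/
noncomputable def projX (p u v : ℕ) : VN p u v →ₗ[ℝ] (Fin p → ℝ) where
  toFun w := fun i => w (Sum.inl (Sum.inl i))
  map_add' y z := rfl
  map_smul' c y := rfl

lemma iotaY_injective : Function.Injective (iotaY p u v) := by
  intro y z h
  funext l
  have := congrFun h (Sum.inl (Sum.inr l))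
  simpa [iotaY] using this

lemma projX_surjective : Function.Surjective (projX p u v) := by
  intro y
  exact ⟨Sum.elim (Sum.elim y (fun _ => 0)) (fun _ => 0), rfl⟩

lemma hoJN_mulVecLin (x : Fin p → ℝ) {n : ℕ} (e : Fin n → VN p u v) (ε : Fin n → ℝ) :
    (hoJN u v ψ x e ε).mulVecLin
      = iotaY p u v ∘ₗ (Mblock ψ x e ε).mulVecLin ∘ₗ projX p u v := by
  apply LinearMap.ext; intro w
  funext a
  simp only [Matrix.mulVecLin_apply, LinearMap.comp_apply, Matrix.mulVec, dotProduct]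
  rcases a with ((i|l)|m)
  · simp [hoJN_row_inll, iotaY]
  · show ∑ b, hoJN u v ψ x e ε (Sum.inl (Sum.inr l)) b * w b
        = ∑ i, Mblock ψ x e ε l i * projX p u v w i
    rw [Fintype.sum_sum_type, Fintype.sum_sum_type]
    simp only [hoJN_col_inlr, hoJN_col_inr, zero_mul, Finset.sum_const_zero, add_zero]
    refine Finset.sum_congr rfl fun i _ => ?_
    rw [hoJN_entry]
    rfl
  · simp [hoJN_row_inr, iotaY]

lemma rank_hoJN_eq (x : Fin p → ℝ) {n : ℕ} (e : Fin n → VN p u v) (ε : Fin n → ℝ) :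
    (hoJN u v ψ x e ε).rank = (Mblock ψ x e ε).rank := by
  unfold Matrix.rank
  rw [hoJN_mulVecLin]
  have h1 : LinearMap.range ((Mblock ψ x e ε).mulVecLin ∘ₗ projX p u v)
      = LinearMap.range (Mblock ψ x e ε).mulVecLin :=
    LinearMap.range_comp_of_range_eq_top _ (LinearMap.range_eq_top.mpr projX_surjective)
  rw [LinearMap.range_comp, h1]
  exact ((Submodule.equivMapOfInjective _ iotaY_injective _).finrank_eq).symm

lemma gN_smul_left (x : Fin p → ℝ) (c : ℝ) (Z W : VN p u v) :
    gN u v ψ x (c • Z) W = c * gN u v ψ x Z W := by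
  unfold gN gpsi
  simp only [Pi.smul_apply, smul_eq_mul, mul_add, Finset.mul_sum]
  simp [mul_assoc, mul_comm, mul_left_comm]

lemma gN_smul_right (x : Fin p → ℝ) (c : ℝ) (Z W : VN p u v) :
    gN u v ψ x Z (c • W) = c * gN u v ψ x Z W := by
  unfold gN gpsi
  simp only [Pi.smul_apply, smul_eq_mul, mul_add, Finset.mul_sum]
  simp [mul_assoc, mul_comm, mul_left_comm]

lemma gN_add_left (x : Fin p → ℝ) (Z W Y : VN p u v) :
    gN u v ψ x (Z + W) Y = gN u v ψ x Z Y + gN u v ψ x W Y := by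
  unfold gN gpsi
  simp only [Pi.add_apply, add_mul, mul_add, Finset.sum_add_distrib]
  ring

lemma gN_add_right (x : Fin p → ℝ) (Z W Y : VN p u v) :
    gN u v ψ x Y (Z + W) = gN u v ψ x Y Z + gN u v ψ x Y W := by
  unfold gN gpsi
  simp only [Pi.add_apply, add_mul, mul_add, Finset.sum_add_distrib]
  ring

lemma gN_xpart_nonneg (hu : u = 0) (x : Fin p → ℝ) (Z : VN p u v)
    (hZ : ∀ j, Z (Sum.inl (Sum.inl j)) = 0) : 0 ≤ gN u v ψ x Z Z := by
  unfold gN gpsi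
  rw [Finset.sum_eq_zero (fun i _ => by simp [hZ]),
    Finset.sum_eq_zero (fun i _ => by simp [hZ]),
    Finset.sum_eq_zero (fun i _ => Finset.sum_eq_zero (fun j _ => by simp [hZ]))]
  simp only [add_zero, zero_add]
  apply Finset.sum_nonneg
  intro i _
  rw [if_neg (by omega)]
  rw [one_mul]
  exact mul_self_nonneg _

lemma gN_xpart_nonpos (hv : v = 0) (x : Fin p → ℝ) (Z : VN p u v)
    (hZ : ∀ j, Z (Sum.inl (Sum.inl j)) = 0) : gN u v ψ x Z Z ≤ 0 := by
  unfold gN gpsi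
  rw [Finset.sum_eq_zero (fun i _ => by simp [hZ]),
    Finset.sum_eq_zero (fun i _ => by simp [hZ]),
    Finset.sum_eq_zero (fun i _ => Finset.sum_eq_zero (fun j _ => by simp [hZ]))]
  simp only [add_zero, zero_add]
  apply Finset.sum_nonpos
  intro i _
  rw [if_pos (by omega)]
  nlinarith [mul_self_nonneg (Z (Sum.inr i))]

lemma tuple5 {α β γ δ η : Type*} [Fintype α] [Fintype β] [Fintype γ] [Fintype δ] [Fintype η]
    (F : α → β → γ → δ → η → ℝ) :
    ∑ x : α × β × γ × δ × η, F x.1 x.2.1 x.2.2.1 x.2.2.2.1 x.2.2.2.2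
      = ∑ a, ∑ b, ∑ c, ∑ d, ∑ e, F a b c d e := by
  simp [Fintype.sum_prod_type]

lemma sum5_perm {α β γ δ η : Type*} [Fintype α] [Fintype β] [Fintype γ] [Fintype δ] [Fintype η]
    (F : α → β → γ → δ → η → ℝ) :
    ∑ l : α, ∑ i : β, ∑ m : γ, ∑ j : δ, ∑ k : η, F l i m j k
      = ∑ m : γ, ∑ i : β, ∑ j : δ, ∑ k : η, ∑ l : α, F l i m j k := by
  rw [← tuple5, ← tuple5 (F := fun m i j k l => F l i m j k)]
  exact Fintype.sum_equiv
    ⟨fun x => (x.2.2.1, x.2.1, x.2.2.2.1, x.2.2.2.2, x.1),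
     fun y => (y.2.2.2.2, y.2.1, y.1, y.2.2.1, y.2.2.2.1),
     fun x => rfl, fun y => rfl⟩ _ _ (fun x => rfl)

lemma Mblock_pair (x : Fin p → ℝ) {n : ℕ} (e : Fin n → VN p u v) (ε : Fin n → ℝ)
    (Y Z : Fin p → ℝ) :
    ∑ l, Z l * (Mblock ψ x e ε).mulVec Y l
      = ∑ m, ε m * jacobiForm ψ x (fun j => e m (Sum.inl (Sum.inl j))) Y Z := by
  trans ∑ l, ∑ i, ∑ m, ∑ j, ∑ k, ε m * (curv ψ i j k l x * Y i
    * e m (Sum.inl (Sum.inl j)) * e m (Sum.inl (Sum.inl k)) * Z l)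
  · unfold Mblock
    simp only [Matrix.mulVec, dotProduct, Matrix.of_apply, Finset.mul_sum,
      Finset.sum_mul]
    refine Finset.sum_congr rfl fun l _ => Finset.sum_congr rfl fun i _ =>
      Finset.sum_congr rfl fun m _ => Finset.sum_congr rfl fun j _ =>
      Finset.sum_congr rfl fun k _ => by ring
  · rw [sum5_perm]
    unfold jacobiForm
    simp only [Finset.mul_sum]

lemma Mblock_ker_iff (x : Fin p → ℝ) {n : ℕ} (e : Fin n → VN p u v) (ε : Fin n → ℝ)
    (Y : Fin p → ℝ) :
    (Mblock ψ x e ε).mulVec Y = 0 ↔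
      ∀ Z, ∑ m, ε m * jacobiForm ψ x (fun j => e m (Sum.inl (Sum.inl j))) Y Z = 0 := by
  constructor
  · intro h Z
    rw [← Mblock_pair, h]
    simp
  · intro h
    funext l
    have h2 := Mblock_pair (ψ := ψ) x e ε Y (Pi.single l 1)
    rw [h (Pi.single l 1)] at h2
    show (Mblock ψ x e ε).mulVec Y l = 0
    simpa [Pi.single_apply, ite_mul] using h2

lemma Mblock_rank_one (hψ : MemPsi ψ) (x : Fin p → ℝ) (e : Fin 1 → VN p u v)
    (ε : Fin 1 → ℝ) (σ : ℝ) (hσ : σ ≠ 0) (hε : ∀ m, ε m = σ)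
    (hX : (fun j => e 0 (Sum.inl (Sum.inl j))) ≠ 0) :
    (Mblock ψ x e ε).rank = p - 1 := by
  set X0 : Fin p → ℝ := fun j => e 0 (Sum.inl (Sum.inl j)) with hX0
  have hker : LinearMap.ker (Mblock ψ x e ε).mulVecLin = Submodule.span ℝ {X0} := by
    ext Y
    rw [LinearMap.mem_ker, Matrix.mulVecLin_apply, Mblock_ker_iff]
    constructor
    · intro h
      have h' : ∀ Z, jacobiForm ψ x X0 Y Z = 0 := by
        intro Z
        have h2 := h Z
        rw [Fin.sum_univ_one, hε 0] at h2
        exact (mul_eq_zero.mp h2).resolve_left hσ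
      obtain ⟨c, hc⟩ := ((hψ.2 x X0 hX).2 Y).mp h'
      rw [Submodule.mem_span_singleton]
      exact ⟨c, hc.symm⟩
    · intro hY Z
      obtain ⟨c, hc⟩ := Submodule.mem_span_singleton.mp hY
      have h' : ∀ Z, jacobiForm ψ x X0 Y Z = 0 := ((hψ.2 x X0 hX).2 Y).mpr ⟨c, hc.symm⟩
      rw [Fin.sum_univ_one, h' Z]
      ring
  have h1 := (Mblock ψ x e ε).mulVecLin.finrank_range_add_finrank_ker
  rw [hker, finrank_span_singleton (by exact hX)] at h1
  have h2 : Module.finrank ℝ (Fin p → ℝ) = p := by simp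
  rw [h2] at h1
  have hp1 : 1 ≤ p := by
    by_contra hp0
    interval_cases p
    · exact hX (funext fun j => absurd j.2 (by omega))
  unfold Matrix.rank
  omega

lemma Mblock_rank_two {n : ℕ} (hψ : MemPsi ψ) (x : Fin p → ℝ) (e : Fin n → VN p u v)
    (ε : Fin n → ℝ) (σ : ℝ) (hσ : σ ≠ 0) (hε : ∀ m, ε m = σ) (m₀ m₁ : Fin n)
    (hX : ∀ m, (fun j => e m (Sum.inl (Sum.inl j))) ≠ 0)
    (hind : ∀ a b : ℝ, (a • (fun j => e m₀ (Sum.inl (Sum.inl j)))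
        + b • (fun j => e m₁ (Sum.inl (Sum.inl j)))) = (0 : Fin p → ℝ) → a = 0 ∧ b = 0) :
    (Mblock ψ x e ε).rank = p := by
  set X : Fin n → (Fin p → ℝ) := fun m j => e m (Sum.inl (Sum.inl j)) with hXdef
  have hker : LinearMap.ker (Mblock ψ x e ε).mulVecLin = ⊥ := by
    rw [Submodule.eq_bot_iff]
    intro Y hY
    rw [LinearMap.mem_ker, Matrix.mulVecLin_apply, Mblock_ker_iff] at hY
    have hsum : ∀ Z, ∑ m, jacobiForm ψ x (X m) Y Z = 0 := by
      intro Z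
      have e1 : ∑ m, ε m * jacobiForm ψ x (X m) Y Z
          = σ * ∑ m, jacobiForm ψ x (X m) Y Z := by
        rw [Finset.mul_sum]
        exact Finset.sum_congr rfl fun m _ => by rw [hε m]
      have h2 := hY Z
      rw [e1] at h2
      exact (mul_eq_zero.mp h2).resolve_left hσ
    have hYY : ∀ m : Fin n, jacobiForm ψ x (X m) Y Y = 0 := by
      have h0 := hsum Y
      have h3 := (Finset.sum_eq_zero_iff_of_nonneg
        (fun m _ => (hψ.2 x (X m) (hX m)).1 Y)).mp h0
      exact fun m => h3 m (Finset.mem_univ m)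
    obtain ⟨c₀, hc₀⟩ := ((hψ.2 x (X m₀) (hX m₀)).2 Y).mp
      (jacobi_null hψ x _ (hX m₀) Y (hYY m₀))
    obtain ⟨c₁, hc₁⟩ := ((hψ.2 x (X m₁) (hX m₁)).2 Y).mp
      (jacobi_null hψ x _ (hX m₁) Y (hYY m₁))
    have hzero : c₀ • X m₀ + (-c₁) • X m₁ = 0 := by
      rw [neg_smul, ← hc₀, ← hc₁]
      abel
    obtain ⟨ha, _⟩ := hind c₀ (-c₁) hzero
    rw [hc₀, ha, zero_smul]
  have h1 := (Mblock ψ x e ε).mulVecLin.finrank_range_add_finrank_ker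
  rw [hker, finrank_bot] at h1
  have h2 : Module.finrank ℝ (Fin p → ℝ) = p := by simp
  rw [h2] at h1
  unfold Matrix.rank
  omega

lemma gN_zero_zero (x : Fin p → ℝ) : gN u v ψ x (0 : VN p u v) (0 : VN p u v) = 0 := by
  have h := gN_smul_left (ψ := ψ) x 0 (0 : VN p u v) (0 : VN p u v)
  rw [zero_smul, zero_mul] at h
  exact h

lemma sig_nonpos (x : Fin p → ℝ) {r : ℕ} (π : Submodule ℝ (VN p u v))
    (h : HasSignature (gN u v ψ x) π r 0) : ∀ z ∈ π, gN u v ψ x z z ≤ 0 := by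
  intro z hz
  by_contra hpos
  push_neg at hpos
  have hz0 : z ≠ 0 := by
    rintro rfl
    rw [gN_zero_zero] at hpos
    exact lt_irrefl 0 hpos
  have hW : ∀ w ∈ Submodule.span ℝ {z}, w ≠ 0 → 0 < gN u v ψ x w w := by
    intro w hw hw0
    obtain ⟨c, rfl⟩ := Submodule.mem_span_singleton.mp hw
    have hc : c ≠ 0 := fun hc0 => hw0 (by rw [hc0, zero_smul])
    rw [gN_smul_left, gN_smul_right]
    have := mul_pos (mul_self_pos.mpr hc) hpos
    nlinarith
  have hle := h.2.2.2.2 (Submodule.span ℝ {z})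
    (Submodule.span_le.mpr (Set.singleton_subset_iff.mpr hz)) hW
  rw [finrank_span_singleton hz0] at hle
  omega

lemma sig_nonneg (x : Fin p → ℝ) {s : ℕ} (π : Submodule ℝ (VN p u v))
    (h : HasSignature (gN u v ψ x) π 0 s) : ∀ z ∈ π, 0 ≤ gN u v ψ x z z := by
  intro z hz
  by_contra hneg
  push_neg at hneg
  have hz0 : z ≠ 0 := by
    rintro rfl
    rw [gN_zero_zero] at hneg
    exact lt_irrefl 0 hneg
  have hW : ∀ w ∈ Submodule.span ℝ {z}, w ≠ 0 → gN u v ψ x w w < 0 := by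
    intro w hw hw0
    obtain ⟨c, rfl⟩ := Submodule.mem_span_singleton.mp hw
    have hc : c ≠ 0 := fun hc0 => hw0 (by rw [hc0, zero_smul])
    rw [gN_smul_left, gN_smul_right]
    have := mul_pos (mul_self_pos.mpr hc) (neg_pos.mpr hneg)
    nlinarith
  have hle := h.2.2.1 (Submodule.span ℝ {z})
    (Submodule.span_le.mpr (Set.singleton_subset_iff.mpr hz)) hW
  rw [finrank_span_singleton hz0] at hle
  omega

/-- Rank determination, timelike case. -/
lemma hoJN_rank_time (hψ : MemPsi ψ) (hu : u = 0) {r : ℕ} (hr1 : 1 ≤ r)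
    (x : Fin p → ℝ) (π : Submodule ℝ (VN p u v)) (e : Fin r → VN p u v) (ε : Fin r → ℝ)
    (hsig : HasSignature (gN u v ψ x) π r 0) (hob : IsOrthoBasis (gN u v ψ x) π e ε) :
    (hoJN u v ψ x e ε).rank = if r = 1 then p - 1 else p := by
  have hmem : ∀ m, e m ∈ π := fun m => hob.1 ▸ Submodule.subset_span ⟨m, rfl⟩
  have hnonpos := sig_nonpos x π hsig
  have hε : ∀ m, ε m = -1 := by
    intro m
    rcases hob.2.1 m with h1 | h1
    · exfalso
      have hg := hob.2.2 m m
      rw [if_pos rfl, h1] at hg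
      have := hnonpos (e m) (hmem m)
      rw [hg] at this
      linarith
    · exact h1
  have hXne : ∀ m, (fun j => e m (Sum.inl (Sum.inl j))) ≠ 0 := by
    intro m h0
    have hg := hob.2.2 m m
    rw [if_pos rfl, hε m] at hg
    have h2 : 0 ≤ gN u v ψ x (e m) (e m) :=
      gN_xpart_nonneg hu x (e m) (fun j => congrFun h0 j)
    rw [hg] at h2
    linarith
  rcases Nat.lt_or_ge r 2 with hr | hr
  · have hr1' : r = 1 := by omega
    rw [if_pos hr1']
    subst hr1'
    rw [rank_hoJN_eq]
    exact Mblock_rank_one hψ x e ε (-1) (by norm_num) hε (hXne 0)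
  · rw [if_neg (by omega)]
    rw [rank_hoJN_eq]
    set m₀ : Fin r := ⟨0, by omega⟩
    set m₁ : Fin r := ⟨1, by omega⟩
    have hne : m₀ ≠ m₁ := by simp [m₀, m₁, Fin.ext_iff]
    have hind : ∀ a b : ℝ, (a • (fun j => e m₀ (Sum.inl (Sum.inl j)))
        + b • (fun j => e m₁ (Sum.inl (Sum.inl j)))) = (0 : Fin p → ℝ) → a = 0 ∧ b = 0 := by
      intro a b hab
      set z : VN p u v := a • e m₀ + b • e m₁ with hzdef
      have hzπ : z ∈ π := Submodule.add_mem _ (Submodule.smul_mem _ _ (hmem m₀))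
        (Submodule.smul_mem _ _ (hmem m₁))
      have hzx : ∀ j, z (Sum.inl (Sum.inl j)) = 0 := by
        intro j
        have := congrFun hab j
        simpa [hzdef] using this
      have h1 : 0 ≤ gN u v ψ x z z := gN_xpart_nonneg hu x z hzx
      have h2 : gN u v ψ x z z = -(a ^ 2 + b ^ 2) := by
        rw [hzdef]
        simp only [gN_add_left, gN_add_right, gN_smul_left, gN_smul_right]
        rw [hob.2.2 m₀ m₀, hob.2.2 m₀ m₁, hob.2.2 m₁ m₀, hob.2.2 m₁ m₁]
        rw [if_pos rfl, if_neg hne, if_neg (Ne.symm hne), hε m₀]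
        simp only [ite_true, if_true, hε m₁]
        ring
      rw [h2] at h1
      constructor <;> nlinarith [sq_nonneg a, sq_nonneg b]
    exact Mblock_rank_two hψ x e ε (-1) (by norm_num) hε m₀ m₁ hXne hind

/-- Rank determination, spacelike case. -/
lemma hoJN_rank_space (hψ : MemPsi ψ) (hv : v = 0) {s : ℕ} (hs1 : 1 ≤ s)
    (x : Fin p → ℝ) (π : Submodule ℝ (VN p u v)) (e : Fin s → VN p u v) (ε : Fin s → ℝ)
    (hsig : HasSignature (gN u v ψ x) π 0 s) (hob : IsOrthoBasis (gN u v ψ x) π e ε) :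
    (hoJN u v ψ x e ε).rank = if s = 1 then p - 1 else p := by
  have hmem : ∀ m, e m ∈ π := fun m => hob.1 ▸ Submodule.subset_span ⟨m, rfl⟩
  have hnonneg := sig_nonneg x π hsig
  have hε : ∀ m, ε m = 1 := by
    intro m
    rcases hob.2.1 m with h1 | h1
    · exact h1
    · exfalso
      have hg := hob.2.2 m m
      rw [if_pos rfl, h1] at hg
      have := hnonneg (e m) (hmem m)
      rw [hg] at this
      linarith
  have hXne : ∀ m, (fun j => e m (Sum.inl (Sum.inl j))) ≠ 0 := by
    intro m h0
    have hg := hob.2.2 m m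
    rw [if_pos rfl, hε m] at hg
    have h2 : gN u v ψ x (e m) (e m) ≤ 0 :=
      gN_xpart_nonpos hv x (e m) (fun j => congrFun h0 j)
    rw [hg] at h2
    linarith
  rcases Nat.lt_or_ge s 2 with hr | hr
  · have hr1' : s = 1 := by omega
    rw [if_pos hr1']
    subst hr1'
    rw [rank_hoJN_eq]
    exact Mblock_rank_one hψ x e ε 1 (by norm_num) hε (hXne 0)
  · rw [if_neg (by omega)]
    rw [rank_hoJN_eq]
    set m₀ : Fin s := ⟨0, by omega⟩
    set m₁ : Fin s := ⟨1, by omega⟩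
    have hne : m₀ ≠ m₁ := by simp [m₀, m₁, Fin.ext_iff]
    have hind : ∀ a b : ℝ, (a • (fun j => e m₀ (Sum.inl (Sum.inl j)))
        + b • (fun j => e m₁ (Sum.inl (Sum.inl j)))) = (0 : Fin p → ℝ) → a = 0 ∧ b = 0 := by
      intro a b hab
      set z : VN p u v := a • e m₀ + b • e m₁ with hzdef
      have hzπ : z ∈ π := Submodule.add_mem _ (Submodule.smul_mem _ _ (hmem m₀))
        (Submodule.smul_mem _ _ (hmem m₁))
      have hzx : ∀ j, z (Sum.inl (Sum.inl j)) = 0 := by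
        intro j
        have := congrFun hab j
        simpa [hzdef] using this
      have h1 : gN u v ψ x z z ≤ 0 := gN_xpart_nonpos hv x z hzx
      have h2 : gN u v ψ x z z = a ^ 2 + b ^ 2 := by
        rw [hzdef]
        simp only [gN_add_left, gN_add_right, gN_smul_left, gN_smul_right]
        rw [hob.2.2 m₀ m₀, hob.2.2 m₀ m₁, hob.2.2 m₁ m₀, hob.2.2 m₁ m₁]
        rw [if_pos rfl, if_neg hne, if_neg (Ne.symm hne), hε m₀]
        simp only [ite_true, if_true, hε m₁]
        ring
      rw [h2] at h1
      constructor <;> nlinarith [sq_nonneg a, sq_nonneg b]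
    exact Mblock_rank_two hψ x e ε 1 (by norm_num) hε m₀ m₁ hXne hind

end Aux2

/-- Let `ψ ∈ Ψ`. If `u = 0`, then for every `1 ≤ r ≤ p` and every timelike
`r`-dimensional subspace `π` of `(N, g_N)` one has `rank J_N(π) = p-1` if `r = 1` and
`rank J_N(π) = p` if `r ≥ 2`; moreover `J_N(π)² = 0` and any two such operators are similar,
so `(N, g_N)` is Jordan Osserman of type `(r,0)`. Dually, if `v = 0`, the same holds for
spacelike `s`-dimensional subspaces, `1 ≤ s ≤ p`, and `(N, g_N)` is Jordan Osserman of type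
`(0,s)`. -/
theorem stmt14 (p u v : ℕ) (hp : 2 ≤ p)
    (ψ : (Fin p → ℝ) → Fin p → Fin p → ℝ) (hψ : MemPsi ψ) :
    (u = 0 → ∀ r : ℕ, 1 ≤ r → r ≤ p →
      (∀ (x y : Fin p → ℝ) (w : Fin (u + v) → ℝ) (π : Submodule ℝ (VN p u v))
        (e : Fin r → VN p u v) (ε : Fin r → ℝ),
        HasSignature (gN u v ψ x) π r 0 → IsOrthoBasis (gN u v ψ x) π e ε →
        (r = 1 → (hoJN u v ψ x e ε).rank = p - 1) ∧
        (2 ≤ r → (hoJN u v ψ x e ε).rank = p) ∧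
        hoJN u v ψ x e ε * hoJN u v ψ x e ε = 0) ∧
      (∀ (x₁ x₂ : Fin p → ℝ) (π₁ π₂ : Submodule ℝ (VN p u v))
        (e₁ e₂ : Fin r → VN p u v) (ε₁ ε₂ : Fin r → ℝ),
        HasSignature (gN u v ψ x₁) π₁ r 0 → IsOrthoBasis (gN u v ψ x₁) π₁ e₁ ε₁ →
        HasSignature (gN u v ψ x₂) π₂ r 0 → IsOrthoBasis (gN u v ψ x₂) π₂ e₂ ε₂ →
        MatSimilar (hoJN u v ψ x₁ e₁ ε₁) (hoJN u v ψ x₂ e₂ ε₂))) ∧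
    (v = 0 → ∀ s : ℕ, 1 ≤ s → s ≤ p →
      (∀ (x y : Fin p → ℝ) (w : Fin (u + v) → ℝ) (π : Submodule ℝ (VN p u v))
        (e : Fin s → VN p u v) (ε : Fin s → ℝ),
        HasSignature (gN u v ψ x) π 0 s → IsOrthoBasis (gN u v ψ x) π e ε →
        (s = 1 → (hoJN u v ψ x e ε).rank = p - 1) ∧
        (2 ≤ s → (hoJN u v ψ x e ε).rank = p) ∧
        hoJN u v ψ x e ε * hoJN u v ψ x e ε = 0) ∧
      (∀ (x₁ x₂ : Fin p → ℝ) (π₁ π₂ : Submodule ℝ (VN p u v))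
        (e₁ e₂ : Fin s → VN p u v) (ε₁ ε₂ : Fin s → ℝ),
        HasSignature (gN u v ψ x₁) π₁ 0 s → IsOrthoBasis (gN u v ψ x₁) π₁ e₁ ε₁ →
        HasSignature (gN u v ψ x₂) π₂ 0 s → IsOrthoBasis (gN u v ψ x₂) π₂ e₂ ε₂ →
        MatSimilar (hoJN u v ψ x₁ e₁ ε₁) (hoJN u v ψ x₂ e₂ ε₂))) := by
  constructor
  · intro hu r hr1 hrp
    constructor
    · intro x y w π e ε hsig hob
      refine ⟨?_, ?_, hoJN_sq x e ε⟩
      · intro hr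
        rw [hoJN_rank_time hψ hu hr1 x π e ε hsig hob, if_pos hr]
      · intro hr
        rw [hoJN_rank_time hψ hu hr1 x π e ε hsig hob, if_neg (by omega)]
    · intro x₁ x₂ π₁ π₂ e₁ e₂ ε₁ ε₂ hs₁ ho₁ hs₂ ho₂
      apply mat_similar_of_sq_zero _ _ (hoJN_sq x₁ e₁ ε₁) (hoJN_sq x₂ e₂ ε₂)
      rw [hoJN_rank_time hψ hu hr1 x₁ π₁ e₁ ε₁ hs₁ ho₁,
          hoJN_rank_time hψ hu hr1 x₂ π₂ e₂ ε₂ hs₂ ho₂]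
  · intro hv s hs1 hsp
    constructor
    · intro x y w π e ε hsig hob
      refine ⟨?_, ?_, hoJN_sq x e ε⟩
      · intro hr
        rw [hoJN_rank_space hψ hv hs1 x π e ε hsig hob, if_pos hr]
      · intro hr
        rw [hoJN_rank_space hψ hv hs1 x π e ε hsig hob, if_neg (by omega)]
    · intro x₁ x₂ π₁ π₂ e₁ e₂ ε₁ ε₂ hs₁ ho₁ hs₂ ho₂
      apply mat_similar_of_sq_zero _ _ (hoJN_sq x₁ e₁ ε₁) (hoJN_sq x₂ e₂ ε₂)
      rw [hoJN_rank_space hψ hv hs1 x₁ π₁ e₁ ε₁ hs₁ ho₁,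
          hoJN_rank_space hψ hv hs1 x₂ π₂ e₂ ε₂ hs₂ ho₂]
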